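/- Let S be a uniformly random subset of [0,n] containing 0 and n (uniform among the 2^{n-1} such subsets, n ≥ 2). If s ∈ [1, n−1], then P(s ∉ S+S) = (1/2)·(3/4)^{(s−1)/2} if s is odd, and P(s ∉ S+S) = (1/4)·(3/4)^{(s−2)/2} if s is even; in particular P(s ∉ S+S) ≤ (1/2)·(3/4)^{(s−1)/2}. Moreover, if s ∈ [n+1, 2n−1], then P(s ∉ S+S) = P(2n−s ∉ S+S). -/

import Mathlib

open Finset Filter Pointwise
open scoped Classical

/-- `n - S = {n - s : s ∈ S}`. -/
def mirror (n : ℕ) (S : Finset ℤ) : Finset ℤ := S.image (fun s => (n : ℤ) - s)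

/-- Probability that a uniformly random subset of `[0,n]` satisfies `P`. -/
noncomputable def prAll (n : ℕ) (P : Finset ℤ → Prop) : ℝ :=
  (((Finset.Icc (0:ℤ) n).powerset.filter P).card : ℝ) / 2 ^ (n + 1)

/-- Probability w.r.t. the uniform distribution on subsets of `[0,n]` containing `0` and `n`. -/
noncomputable def pr0n (n : ℕ) (P : Finset ℤ → Prop) : ℝ :=
  (((Finset.Icc (0:ℤ) n).powerset.filter
      (fun S => (0:ℤ) ∈ S ∧ (n:ℤ) ∈ S ∧ P S)).card : ℝ) / 2 ^ (n - 1)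

/-- A finite set of integers is MSTD if it has more sums than differences. -/
def IsMSTD (S : Finset ℤ) : Prop := (S - S).card < (S + S).card

/-- Probability that a uniformly random subset of `[0,n]` is MSTD. -/
noncomputable def rhoN (n : ℕ) : ℝ := prAll n IsMSTD

/-- The pair (number of missing sums, number of missing differences) of `S ⊆ [0,n]`. -/
def lam (n : ℕ) (S : Finset ℤ) : ℕ × ℕ :=
  (2 * n + 1 - (S + S).card, 2 * n + 1 - (S - S).card)

/-- Probability that a uniformly random subset of `[0,n]` satisfies `lam n S ∈ Λ`. -/
noncomputable def rhoL (Λ : Set (ℕ × ℕ)) (n : ℕ) : ℝ := prAll n (fun S => lam n S ∈ Λ)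

/-- An MSTD fringe pair of order `k`. -/
def IsFringePair (A B : Finset ℤ) (k : ℕ) : Prop :=
  A ⊆ Finset.Icc (0:ℤ) k ∧ B ⊆ Finset.Icc (0:ℤ) k ∧ (0:ℤ) ∈ A ∧ (0:ℤ) ∈ B ∧
    2 * ((A + B) ∩ Finset.Icc (0:ℤ) k).card <
      ((A + A) ∩ Finset.Icc (0:ℤ) k).card + ((B + B) ∩ Finset.Icc (0:ℤ) k).card

/-- `S ⊆ [0,n]` is a rich MSTD set with MSTD fringe pair `(A, B; k)`. -/
def IsRichWith (n : ℕ) (S A B : Finset ℤ) (k : ℕ) : Prop :=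
  IsFringePair A B k ∧ 2 * k < n ∧ S ∩ Finset.Icc (0:ℤ) k = A ∧
    mirror n S ∩ Finset.Icc (0:ℤ) k = B ∧
    Finset.Icc ((k:ℤ) + 1) (2 * n - k - 1) ⊆ S + S

/-- The strict partial order on MSTD fringe pairs: `(A', B'; k') < (A, B; k)`. -/
def FringeLt (A' B' : Finset ℤ) (k' : ℕ) (A B : Finset ℤ) (k : ℕ) : Prop :=
  IsFringePair A' B' k' ∧ IsFringePair A B k ∧ k' < k ∧
    A' = A ∩ Finset.Icc (0:ℤ) k' ∧ B' = B ∩ Finset.Icc (0:ℤ) k' ∧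
    Finset.Icc ((k':ℤ) + 1) k ⊆ A + A ∧ Finset.Icc ((k':ℤ) + 1) k ⊆ B + B

/-- A minimal MSTD fringe pair. -/
def MinimalFringePair (A B : Finset ℤ) (k : ℕ) : Prop :=
  IsFringePair A B k ∧ ¬ ∃ A' B' k', FringeLt A' B' k' A B k

/-- `σ_n(A; k)`: probability that a uniform random `T ⊆ [0,n]` is `k`-semi-rich with
prefix `(A; k)`. -/
noncomputable def sigmaN (A : Finset ℤ) (k n : ℕ) : ℝ :=
  (((Finset.Icc (0:ℤ) n).powerset.filter
      (fun T => T ∩ Finset.Icc (0:ℤ) k = A ∧ Finset.Icc ((k:ℤ) + 1) n ⊆ T + T)).card : ℝ) / 2 ^ n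

/-- `ρ_n(A, B; k) = 2^{-n+1} · #{S ⊆ [0,n] : S ∩ [0,k] = A, (n−S) ∩ [0,k] = B,
[k+1, 2n−k−1] ⊆ S+S}`. -/
noncomputable def rhoABn (A B : Finset ℤ) (k n : ℕ) : ℝ :=
  2 * (((Finset.Icc (0:ℤ) n).powerset.filter
      (fun S => S ∩ Finset.Icc (0:ℤ) k = A ∧ mirror n S ∩ Finset.Icc (0:ℤ) k = B ∧
        Finset.Icc ((k:ℤ) + 1) (2 * n - k - 1) ⊆ S + S)).card : ℝ) / 2 ^ n

/-- `ρ_{*n} = 2^{-n+1} · #{S ⊆ [0,n] : 0, n ∈ S and S is MSTD}`. -/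
noncomputable def rhoStarN (n : ℕ) : ℝ :=
  2 * (((Finset.Icc (0:ℤ) n).powerset.filter
      (fun S => (0:ℤ) ∈ S ∧ (n:ℤ) ∈ S ∧ IsMSTD S)).card : ℝ) / 2 ^ n

/-- `G_j(A; k) = #{T ⊆ [0,j] : T ∩ [0,k] = A, [k+1,j−1] ⊆ T+T, j ∉ T+T}`. -/
noncomputable def G (A : Finset ℤ) (k j : ℕ) : ℕ :=
  ((Finset.Icc (0:ℤ) j).powerset.filter
      (fun T => T ∩ Finset.Icc (0:ℤ) k = A ∧
        Finset.Icc ((k:ℤ) + 1) ((j:ℤ) - 1) ⊆ T + T ∧ (j:ℤ) ∉ T + T)).card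

/-- `S ⊆ [0,n]` is `k`-affluent. -/
def Affluent (n k : ℕ) (S : Finset ℤ) : Prop :=
  Finset.Icc ((k:ℤ) + 1) (2 * n - k - 1) ⊆ S + S ∧
    Finset.Icc (-(n:ℤ) + k + 1) ((n:ℤ) - k - 1) ⊆ S - S

/-- `μ_n(A, B; k)`: probability that a uniform random `S ⊆ [0,n]` is `k`-affluent
with fringe pair `(A, B; k)`. -/
noncomputable def muN (A B : Finset ℤ) (k n : ℕ) : ℝ :=
  prAll n (fun S => S ∩ Finset.Icc (0:ℤ) k = A ∧ mirror n S ∩ Finset.Icc (0:ℤ) k = B ∧ Affluent n k S)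

/-- The strict partial order on general fringe pairs. -/
def GFringeLt (A' B' : Finset ℤ) (k' : ℕ) (A B : Finset ℤ) (k : ℕ) : Prop :=
  A' ⊆ Finset.Icc (0:ℤ) k' ∧ B' ⊆ Finset.Icc (0:ℤ) k' ∧ A ⊆ Finset.Icc (0:ℤ) k ∧ B ⊆ Finset.Icc (0:ℤ) k ∧
    k' < k ∧ A' = A ∩ Finset.Icc (0:ℤ) k' ∧ B' = B ∩ Finset.Icc (0:ℤ) k' ∧
    Finset.Icc ((k':ℤ) + 1) k ⊆ A + A ∧ Finset.Icc ((k':ℤ) + 1) k ⊆ B + B ∧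
    Finset.Icc ((k':ℤ) + 1) k ⊆ A + B

/-- A minimal general fringe pair. -/
def GMinimal (A B : Finset ℤ) (k : ℕ) : Prop :=
  A ⊆ Finset.Icc (0:ℤ) k ∧ B ⊆ Finset.Icc (0:ℤ) k ∧ ¬ ∃ A' B' k', GFringeLt A' B' k' A B k

/-- `λ(A, B; k)` for a general fringe pair. -/
noncomputable def lamPair (A B : Finset ℤ) (k : ℕ) : ℕ × ℕ :=
  (2 * (k + 1) - ((A + A) ∩ Finset.Icc (0:ℤ) k).card - ((B + B) ∩ Finset.Icc (0:ℤ) k).card,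
   2 * (k + 1 - ((A + B) ∩ Finset.Icc (0:ℤ) k).card))


/-! For `1 ≤ s < n`, a set `S ⊆ [0,n]` containing `0` and `n` misses the sum `s` exactly when
`s ∉ S`, `S` contains at most one element of each pair `{x, s - x}` with `1 ≤ x < s - x`, and
`s / 2 ∉ S` when `s` is even; the elements of `[s+1, n-1]` are unconstrained, since every sum
involving them exceeds `s`. Each of the `⌊(s-1)/2⌋` pairs admits `3` of its `4` configurations, so
`P(s ∉ S+S) = 3^⌊(s-1)/2⌋ / 2^s`. For `s > n`, the reflection `S ↦ n - S` permutes the family and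
turns the sum `s` into `2n - s`. -/

namespace Finset

variable {α : Type*} [DecidableEq α]

lemma filter_notMem_powerset (U : Finset α) (a : α) :
    U.powerset.filter (fun T => a ∉ T) = (U.erase a).powerset := by
  ext T
  simp only [mem_filter, mem_powerset, subset_erase]

lemma card_filter_powerset_insert {U : Finset α} {a : α} (ha : a ∉ U) (P : Finset α → Prop)
    [DecidablePred P] :
    #(((insert a U).powerset).filter P) =
      #(U.powerset.filter P) + #(U.powerset.filter (fun T => P (insert a T))) := by
  simp only [card_filter]
  exact sum_powerset_insert ha _

lemma card_filter_mem_powerset_insert {U : Finset α} {a : α} (ha : a ∉ U) (P : Finset α → Prop)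
    [DecidablePred P] :
    #(((insert a U).powerset).filter (fun S => a ∈ S ∧ P S)) =
      #(U.powerset.filter (fun T => P (insert a T))) := by
  rw [card_filter_powerset_insert ha, filter_false_of_mem, card_empty, zero_add]
  · simp
  · exact fun S hS h => ha (mem_powerset.1 hS h.1)

variable [AddCommGroup α]

lemma mem_insert_add_insert {T : Finset α} {a t : α} :
    t ∈ insert a T + insert a T ↔ a + a = t ∨ t - a ∈ T ∨ t ∈ T + T := by
  simp only [mem_add, mem_insert]
  constructor
  · rintro ⟨x, rfl | hx, y, rfl | hy, rfl⟩
    · exact Or.inl rfl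
    · exact Or.inr (Or.inl (by simpa using hy))
    · exact Or.inr (Or.inl (by simpa using hx))
    · exact Or.inr (Or.inr ⟨x, hx, y, hy, rfl⟩)
  · rintro (h | h | ⟨x, hx, y, hy, rfl⟩)
    · exact ⟨a, Or.inl rfl, a, Or.inl rfl, h⟩
    · exact ⟨a, Or.inl rfl, t - a, Or.inr h, add_sub_cancel _ _⟩
    · exact ⟨x, Or.inr hx, y, Or.inr hy, rfl⟩

end Finset

section SumAvoiders

variable {α : Type*} [AddCommGroup α] [DecidableEq α]

def sumAvoiders (U : Finset α) (t : α) : Finset (Finset α) :=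
  U.powerset.filter (fun T => t ∉ T + T)

lemma card_sumAvoiders_empty (t : α) : #(sumAvoiders (∅ : Finset α) t) = 1 := by
  simp [sumAvoiders, filter_singleton]

lemma card_sumAvoiders_insert {U : Finset α} {a : α} (ha : a ∉ U) (t : α) :
    #(sumAvoiders (insert a U) t) =
      #(sumAvoiders U t) + if a + a = t then 0 else #(sumAvoiders (U.erase (t - a)) t) := by
  rw [sumAvoiders, card_filter_powerset_insert ha, sumAvoiders]
  congr 1
  split_ifs with h
  · simp [mem_insert_add_insert, h]
  · rw [sumAvoiders, ← filter_notMem_powerset, filter_filter]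
    congr 1
    refine filter_congr fun T _ => ?_
    simp [mem_insert_add_insert, h]

lemma card_sumAvoiders_insert_of_sub_notMem {U : Finset α} {a t : α} (ha : a ∉ U)
    (hta : t - a ∉ insert a U) :
    #(sumAvoiders (insert a U) t) = 2 * #(sumAvoiders U t) := by
  have h2a : a + a ≠ t := fun h => hta (by simp [← h])
  rw [card_sumAvoiders_insert ha, if_neg h2a,
    erase_eq_of_notMem fun h => hta (mem_insert_of_mem h)]
  ring

lemma card_sumAvoiders_insert_pair {U : Finset α} {a t : α} (ha : a ∉ U) (hta : t - a ∉ U)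
    (h2a : a + a ≠ t) :
    #(sumAvoiders (insert a (insert (t - a) U)) t) = 3 * #(sumAvoiders U t) := by
  have hne : a ≠ t - a := fun h => h2a (eq_sub_iff_add_eq.1 h)
  rw [card_sumAvoiders_insert (by simp [hne, ha]), if_neg h2a, erase_insert hta,
    card_sumAvoiders_insert_of_sub_notMem hta (by simp [ha, hne])]
  ring

lemma card_sumAvoiders_union_of_sub_notMem {U V : Finset α} {t : α} (hUV : Disjoint U V)
    (hV : ∀ v ∈ V, t - v ∉ U ∪ V) :
    #(sumAvoiders (U ∪ V) t) = #(sumAvoiders U t) * 2 ^ #V := by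
  induction V using Finset.induction_on with
  | empty => simp
  | insert v V hv ih =>
    have hvUV : v ∉ U ∪ V := by
      simp only [mem_union, not_or]
      exact ⟨disjoint_right.1 hUV (mem_insert_self v V), hv⟩
    rw [union_insert, card_sumAvoiders_insert_of_sub_notMem hvUV, card_insert_of_notMem hv,
      ih (disjoint_insert_right.1 hUV).2 fun w hw => ?_]
    · ring
    · have := hV w (mem_insert_of_mem hw)
      simp_all
    · simpa [union_insert] using hV v (mem_insert_self v V)

end SumAvoiders

lemma card_sumAvoiders_Icc_symm (t a : ℤ) (k : ℕ) (h : 2 * a ≤ t + 1) :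
    #(sumAvoiders (Icc (a - k) (t - a + k)) t) = 3 ^ k * #(sumAvoiders (Icc a (t - a)) t) := by
  induction k with
  | zero => simp
  | succ k ih =>
    have hIcc : Icc (a - (k + 1 : ℕ)) (t - a + (k + 1 : ℕ)) =
        insert (a - k - 1) (insert (t - (a - k - 1)) (Icc (a - k) (t - a + k))) := by
      ext x
      simp only [mem_Icc, mem_insert]
      omega
    rw [hIcc, card_sumAvoiders_insert_pair (by simp) (by simp; omega) (by omega), ih]
    ring

lemma card_sumAvoiders_Icc_one (s : ℕ) :
    #(sumAvoiders (Icc 1 ((s : ℤ) - 1)) s) = 3 ^ ((s - 1) / 2) := by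
  rcases Nat.even_or_odd' s with ⟨m, rfl | rfl⟩
  · cases m with
    | zero => simp [card_sumAvoiders_empty]
    | succ m =>
      have hIcc : Icc (1 : ℤ) (((2 * (m + 1) : ℕ) : ℤ) - 1) =
          Icc ((m + 1 : ℤ) - m) (((2 * (m + 1) : ℕ) : ℤ) - (m + 1) + m) := by
        congr 1 <;> push_cast <;> ring
      have hmid : Icc (m + 1 : ℤ) (((2 * (m + 1) : ℕ) : ℤ) - (m + 1)) = {(m + 1 : ℤ)} := by
        rw [← Icc_self]; congr 1; push_cast; ring
      rw [hIcc, card_sumAvoiders_Icc_symm _ _ _ (by push_cast; omega), hmid, ← insert_empty,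
        card_sumAvoiders_insert (notMem_empty _), if_pos (by push_cast; ring),
        card_sumAvoiders_empty, show (2 * (m + 1) - 1) / 2 = m by omega]
      ring
  · have hIcc : Icc (1 : ℤ) (((2 * m + 1 : ℕ) : ℤ) - 1) =
        Icc ((m + 1 : ℤ) - m) (((2 * m + 1 : ℕ) : ℤ) - (m + 1) + m) := by
      congr 1 <;> push_cast <;> ring
    rw [hIcc, card_sumAvoiders_Icc_symm _ _ _ (by push_cast; omega),
      Icc_eq_empty (by push_cast; omega), card_sumAvoiders_empty]
    simp

lemma pr0n_eq_card_div (n : ℕ) (hn : 1 ≤ n) (P : Finset ℤ → Prop) :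
    pr0n n P = #((Icc (1 : ℤ) (n - 1)).powerset.filter
      (fun T => P (insert 0 (insert (n : ℤ) T)))) / 2 ^ (n - 1) := by
  have hIcc : Icc (0 : ℤ) n = insert 0 (insert (n : ℤ) (Icc (1 : ℤ) (n - 1))) := by
    ext x
    simp only [mem_Icc, mem_insert]
    omega
  have h0 : (0 : ℤ) ∉ insert (n : ℤ) (Icc (1 : ℤ) (n - 1)) := by simp; omega
  have hn : (n : ℤ) ∉ Icc (1 : ℤ) (n - 1) := by simp
  rw [pr0n, hIcc, card_filter_mem_powerset_insert h0,
    filter_congr (q := fun T => (n : ℤ) ∈ T ∧ P (insert 0 T)) fun T _ => by simp; omega,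
    card_filter_mem_powerset_insert hn]

lemma notMem_insert_zero_insert_add_iff {n s : ℤ} {T : Finset ℤ} (hT : T ⊆ Icc 1 (n - 1))
    (hs : 1 ≤ s) (hsn : s < n) :
    s ∉ insert 0 (insert n T) + insert 0 (insert n T) ↔ s ∉ T ∧ s ∉ T + T := by
  have hTn : s - n ∉ T := fun h => by
    have := mem_Icc.1 (hT h)
    omega
  have h0 : (0 : ℤ) + 0 ≠ s := by omega
  have hsn' : s ≠ n := by omega
  have hnn : n + n ≠ s := by omega
  simp only [mem_insert_add_insert, mem_insert, sub_zero, h0, hsn', hnn, hTn, false_or, not_or]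

lemma card_sumAvoiders_Icc_erase {n s : ℕ} (hs : 1 ≤ s) (hsn : s < n) :
    #(sumAvoiders ((Icc (1 : ℤ) (n - 1)).erase (s : ℤ)) s) =
      3 ^ ((s - 1) / 2) * 2 ^ (n - 1 - s) := by
  have hsplit : (Icc (1 : ℤ) (n - 1)).erase (s : ℤ) =
      Icc 1 ((s : ℤ) - 1) ∪ Icc ((s : ℤ) + 1) (n - 1) := by
    ext x
    simp only [mem_erase, mem_union, mem_Icc]
    omega
  have hdisj : Disjoint (Icc (1 : ℤ) ((s : ℤ) - 1)) (Icc ((s : ℤ) + 1) (n - 1)) := by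
    rw [disjoint_left]
    intro x hx hx'
    simp only [mem_Icc] at hx hx'
    omega
  rw [hsplit, card_sumAvoiders_union_of_sub_notMem hdisj fun v hv => ?_, card_sumAvoiders_Icc_one,
    Int.card_Icc, show ((n : ℤ) - 1 + 1 - (s + 1)).toNat = n - 1 - s by omega]
  simp only [mem_union, mem_Icc] at hv ⊢
  omega

lemma pr0n_notMem_add (n s : ℕ) (hs : 1 ≤ s) (hsn : s < n) :
    pr0n n (fun S => (s : ℤ) ∉ S + S) = 3 ^ ((s - 1) / 2) / 2 ^ s := by
  rw [pr0n_eq_card_div n (by omega)]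
  calc _ = (#(sumAvoiders ((Icc (1 : ℤ) (n - 1)).erase (s : ℤ)) s) : ℝ) / 2 ^ (n - 1) := by
        -- the filter on the left carries a classical decidability instance, so compare members
        congr 3
        ext T
        rw [sumAvoiders, ← filter_notMem_powerset, filter_filter]
        simp only [mem_filter]
        exact and_congr_right fun hT =>
          notMem_insert_zero_insert_add_iff (mem_powerset.1 hT) (by omega) (by omega)
    _ = 3 ^ ((s - 1) / 2) / 2 ^ s := by
        rw [card_sumAvoiders_Icc_erase hs hsn, div_eq_div_iff (by positivity) (by positivity)]
        push_cast
        rw [mul_assoc, ← pow_add, show n - 1 - s + s = n - 1 by omega]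

lemma mirror_mirror (n : ℕ) (S : Finset ℤ) : mirror n (mirror n S) = S := by
  simp [mirror, image_image]

lemma mem_mirror (n : ℕ) (S : Finset ℤ) (x : ℤ) :
    x ∈ mirror n S ↔ (n : ℤ) - x ∈ S := by
  simp only [mirror, mem_image]
  exact ⟨fun ⟨y, hy, hxy⟩ => by rwa [← hxy, sub_sub_cancel],
    fun h => ⟨_, h, sub_sub_cancel _ _⟩⟩

lemma mem_mirror_add_mirror (n : ℕ) (S : Finset ℤ) (t : ℤ) :
    t ∈ mirror n S + mirror n S ↔ 2 * (n : ℤ) - t ∈ S + S := by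
  simp only [Finset.mem_add, mem_mirror]
  constructor
  · rintro ⟨x, hx, y, hy, rfl⟩
    exact ⟨_, hx, _, hy, by ring⟩
  · rintro ⟨x, hx, y, hy, h⟩
    exact ⟨n - x, by simpa using hx, n - y, by simpa using hy, by omega⟩

lemma mirror_subset_Icc {n : ℕ} {S : Finset ℤ} (hS : S ⊆ Icc 0 (n : ℤ)) :
    mirror n S ⊆ Icc 0 (n : ℤ) := fun x hx => by
  have := mem_Icc.1 (hS ((mem_mirror n S x).1 hx))
  rw [mem_Icc]
  omega

lemma pr0n_comp_mirror (n : ℕ) (P : Finset ℤ → Prop) :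
    pr0n n (fun S => P (mirror n S)) = pr0n n P := by
  have hmaps : ∀ Q : Finset ℤ → Prop, ∀ S ∈ (Icc (0 : ℤ) n).powerset.filter
      (fun S => (0 : ℤ) ∈ S ∧ (n : ℤ) ∈ S ∧ Q (mirror n S)),
      mirror n S ∈ (Icc (0 : ℤ) n).powerset.filter
        (fun S => (0 : ℤ) ∈ S ∧ (n : ℤ) ∈ S ∧ Q S) := by
    intro Q S hS
    simp only [mem_filter, mem_powerset, mem_mirror, sub_zero, sub_self] at hS ⊢
    exact ⟨mirror_subset_Icc hS.1, hS.2.2.1, hS.2.1, hS.2.2.2⟩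
  rw [pr0n, pr0n]
  congr 2
  refine card_nbij' (mirror n) (mirror n) (hmaps P) (fun S hS => ?_)
    (fun S _ => mirror_mirror n S) (fun S _ => mirror_mirror n S)
  refine hmaps (fun S => P (mirror n S)) S ?_
  simpa only [mirror_mirror, mem_coe] using hS

lemma pr0n_notMem_add_odd {n m : ℕ} (hm : 2 * m + 1 < n) :
    pr0n n (fun S => ((2 * m + 1 : ℕ) : ℤ) ∉ S + S) = 1 / 2 * (3 / 4 : ℝ) ^ m := by
  rw [pr0n_notMem_add n _ (by omega) hm, show (2 * m + 1 - 1) / 2 = m by omega, div_pow, pow_succ,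
    pow_mul]
  ring

lemma pr0n_notMem_add_even {n m : ℕ} (hm : 2 * m + 2 < n) :
    pr0n n (fun S => ((2 * m + 2 : ℕ) : ℤ) ∉ S + S) = 1 / 4 * (3 / 4 : ℝ) ^ m := by
  rw [pr0n_notMem_add n _ (by omega) hm, show (2 * m + 2 - 1) / 2 = m by omega, div_pow,
    pow_add, pow_mul]
  ring

lemma quarter_mul_pow_le_half_mul_rpow (m : ℕ) :
    1 / 4 * (3 / 4 : ℝ) ^ m ≤ 1 / 2 * (3 / 4 : ℝ) ^ ((m : ℝ) + 1 / 2) := by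
  have hsqrt : 1 / 2 ≤ (3 / 4 : ℝ) ^ (1 / 2 : ℝ) := by
    rw [← Real.sqrt_eq_rpow, Real.le_sqrt (by norm_num) (by norm_num)]
    norm_num
  rw [Real.rpow_add (by norm_num), Real.rpow_natCast]
  nlinarith [pow_pos (show (0 : ℝ) < 3 / 4 by norm_num) m]

theorem missing_sum_prob_general (n s : ℕ) :
    (1 ≤ s → s ≤ n - 1 →
      (Odd s → pr0n n (fun S => (s:ℤ) ∉ S + S) = (1/2) * (3/4 : ℝ) ^ ((s - 1) / 2)) ∧
      (Even s → pr0n n (fun S => (s:ℤ) ∉ S + S) = (1/4) * (3/4 : ℝ) ^ ((s - 2) / 2)) ∧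
      pr0n n (fun S => (s:ℤ) ∉ S + S) ≤ (1/2) * (3/4 : ℝ) ^ (((s:ℝ) - 1) / 2)) ∧
    (n + 1 ≤ s → s ≤ 2 * n - 1 →
      pr0n n (fun S => (s:ℤ) ∉ S + S) = pr0n n (fun S => 2 * (n:ℤ) - s ∉ S + S)) := by
  refine ⟨fun hs hsn => ?_, fun _ _ => ?_⟩
  · obtain ⟨m, rfl | rfl⟩ := Nat.even_or_odd' s
    · obtain ⟨m, rfl⟩ : ∃ k, m = k + 1 := ⟨m - 1, by omega⟩
      have hpr := pr0n_notMem_add_even (n := n) (m := m) (by omega)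
      rw [show 2 * (m + 1) = 2 * m + 2 by ring, hpr, show (2 * m + 2 - 2) / 2 = m by omega,
        show (((2 * m + 2 : ℕ) : ℝ) - 1) / 2 = m + 1 / 2 by push_cast; ring]
      exact ⟨fun h => absurd h (Nat.not_odd_iff_even.2 ⟨m + 1, by ring⟩), fun _ => rfl,
        quarter_mul_pow_le_half_mul_rpow m⟩
    · have hpr := pr0n_notMem_add_odd (n := n) (m := m) (by omega)
      rw [hpr, show (2 * m + 1 - 1) / 2 = m by omega,
        show (((2 * m + 1 : ℕ) : ℝ) - 1) / 2 = m by push_cast; ring, Real.rpow_natCast]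
      exact ⟨fun _ => rfl, fun h => absurd h (Nat.not_even_iff_odd.2 (odd_two_mul_add_one m)),
        le_rfl⟩
  · rw [← pr0n_comp_mirror n]
    simp only [mem_mirror_add_mirror]

/-- probability of a missing sum for a uniform random `S ⊆ [0,n]` with
`0, n ∈ S`. -/
theorem missing_sum_prob (n s : ℕ) (hn : 2 ≤ n) :
    (1 ≤ s → s ≤ n - 1 →
      (Odd s → pr0n n (fun S => (s:ℤ) ∉ S + S) = (1/2) * (3/4 : ℝ) ^ ((s - 1) / 2)) ∧
      (Even s → pr0n n (fun S => (s:ℤ) ∉ S + S) = (1/4) * (3/4 : ℝ) ^ ((s - 2) / 2)) ∧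
      pr0n n (fun S => (s:ℤ) ∉ S + S) ≤ (1/2) * (3/4 : ℝ) ^ (((s:ℝ) - 1) / 2)) ∧
    (n + 1 ≤ s → s ≤ 2 * n - 1 →
      pr0n n (fun S => (s:ℤ) ∉ S + S) = pr0n n (fun S => 2 * (n:ℤ) - s ∉ S + S)) :=
  missing_sum_prob_general n s
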